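/- The sesquiunital sesquialgebra (A, ε, Δ) admits no hopfish antipode: there is no left A⊗A-module S which is free of rank one as a left A-module and whose ℂ-linear dual S* is isomorphic as a right A⊗A-module to Hom_A(ε, Δ). Concretely: any right A⊗1-linear map ψ : A* → Hom_A(ε, Δ) annihilates the eigenvector z ∈ A* defined by z(a_{nl}) = δ_{n,0}, hence is not injective. -/

import Mathlib

/-!
Since `a_{0j} a_{nl} = a_{n,j+l}`, the functional `z` is invariant under left multiplication
by every `a_{0j}`. Feeding this into the `A ⊗ 1`-linearity of `ψ` and then the `A`-linearity of
`ψ z` gives, for every basis vector `d` of `Δ` and every `j`,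
`ψ z d = c_j • (ψ z d) · a_{0j}` for a scalar `c_j`, where `· a_{0j}` shifts the basis of `ε`
by `j`. A finitely supported vector that is, up to scalars, invariant under all shifts of
a basis indexed by `ℤ` vanishes, so `ψ z = 0` although `z ≠ 0`.
-/

theorem Finsupp.eq_zero_of_forall_eq_mul_apply_add {G R : Type*} [AddGroup G] [Infinite G]
    [MulZeroClass R] (f : G →₀ R) (c : G → R) (h : ∀ j k, f k = c j * f (k + j)) : f = 0 := by
  ext k
  obtain ⟨m, hm⟩ := Infinite.exists_notMem_finset f.support
  rw [h (-k + m) k, add_neg_cancel_left, Finsupp.notMem_support_iff.mp hm, mul_zero,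
    Finsupp.coe_zero, Pi.zero_apply]

namespace Module.Basis

section

variable {G R M : Type*} [AddGroup G] [Semiring R] [AddCommMonoid M] [Module R M]

theorem repr_apply_of_map_eq_sub (e : Basis G R M) (T : M →ₗ[R] M) (j : G)
    (hT : ∀ m, T (e m) = e (m - j)) (v : M) (k : G) :
    e.repr (T v) k = e.repr v (k + j) := by
  have hmaps : Finsupp.lapply k ∘ₗ e.repr.toLinearMap ∘ₗ T =
      Finsupp.lapply (k + j) ∘ₗ e.repr.toLinearMap := by
    classical
    refine e.ext fun m => ?_
    simp only [LinearMap.coe_comp, LinearEquiv.coe_coe, Function.comp_apply,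
      Finsupp.lapply_apply, hT, e.repr_self, Finsupp.single_apply, sub_eq_iff_eq_add]
  exact LinearMap.congr_fun hmaps v

theorem eq_zero_of_forall_eq_smul_shift [Infinite G] (e : Basis G R M) (T : G → M →ₗ[R] M)
    (hT : ∀ j m, T j (e m) = e (m - j)) (c : G → R) (v : M) (hv : ∀ j, v = c j • T j v) :
    v = 0 := by
  suffices e.repr v = 0 by simpa using this
  refine Finsupp.eq_zero_of_forall_eq_mul_apply_add _ c fun j k => ?_
  conv_lhs => rw [hv j]
  rw [map_smul, Finsupp.smul_apply, repr_apply_of_map_eq_sub e (T j) j (hT j), smul_eq_mul]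

end

theorem eq_one_of_forall_mul_basis {ι R A : Type*} [CommSemiring R] [Semiring A]
    [Algebra R A] (b : Basis ι R A) (u : A) (hu : ∀ i, u * b i = b i) : u = 1 := by
  have hid : LinearMap.mulLeft R u = LinearMap.id := b.ext fun i => hu i
  simpa using LinearMap.congr_fun hid 1

theorem constr_fst_comp_mulLeft {ι R A : Type*} [CommSemiring R] [Semiring A]
    [Algebra R A] (b : Basis (ℤ × ι) R A) (f : ℤ → R) (u : A) (j : ι → ι)
    (hu : ∀ n l, u * b (n, l) = b (n, j l)) :
    (b.constr R fun nl => f nl.1) ∘ₗ LinearMap.mulLeft R u = b.constr R fun nl => f nl.1 :=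
  b.ext fun ⟨n, l⟩ => by simp [hu]

end Module.Basis

theorem no_hopfish_antipode
    (lam : ℝ)
    (A : Type) [Ring A] [Algebra ℂ A]
    (a : ℤ → ℤ → A)
    (b : Module.Basis (ℤ × ℤ) ℂ A) (hb : ∀ n l : ℤ, b (n, l) = a n l)
    (hmul : ∀ n₁ l₁ n₂ l₂ : ℤ,
      a n₁ l₁ * a n₂ l₂ =
        Complex.exp (Complex.I * (lam * n₁ * l₂)) • a (n₁ + n₂) (l₁ + l₂))
    (D : Type) [AddCommGroup D] [Module ℂ D]
    (dd : ℤ → ℤ → ℤ → D)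
    (bd : Module.Basis (ℤ × ℤ × ℤ) ℂ D) (hbd : ∀ n₁ n₂ l : ℤ, bd (n₁, n₂, l) = dd n₁ n₂ l)
    (rhoL : TensorProduct ℂ A A →ₐ[ℂ] Module.End ℂ D)
    (rhoR : Aᵐᵒᵖ →ₐ[ℂ] Module.End ℂ D)
    (hL : ∀ m₁ j₁ m₂ j₂ n₁ n₂ l : ℤ,
      rhoL (a m₁ j₁ ⊗ₜ[ℂ] a m₂ j₂) (dd n₁ n₂ l) =
        Complex.exp (-(Complex.I *
            (lam * (((n₁ + m₁) * j₁ + (n₂ + m₂) * j₂ : ℤ) : ℝ)))) •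
          dd (n₁ + m₁) (n₂ + m₂) (l - j₁ - j₂))
    (hR : ∀ m j n₁ n₂ l : ℤ,
      rhoR (MulOpposite.op (a m j)) (dd n₁ n₂ l) =
        Complex.exp (Complex.I * (lam * (((m * (l - j)) : ℤ) : ℝ))) •
          dd (n₁ + m) (n₂ + m) (l - j))
    (E : Type) [AddCommGroup E] [Module ℂ E]
    (ee : ℤ → E) (be : Module.Basis ℤ ℂ E) (hbe : ∀ l : ℤ, be l = ee l)
    (rhoE : Aᵐᵒᵖ →ₐ[ℂ] Module.End ℂ E)
    (hE : ∀ m j l : ℤ,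
      rhoE (MulOpposite.op (a m j)) (ee l) =
        Complex.exp (Complex.I * (lam * (((m * (l - j)) : ℤ) : ℝ))) • ee (l - j))
    -- `ψ : A* → Hom_A(ε, Δ)`, taking values in right `A`-linear maps `Δ → ε`:
    (ψ : Module.Dual ℂ A →ₗ[ℂ] (D →ₗ[ℂ] E))
    (hψHom : ∀ (φ : Module.Dual ℂ A) (c : A) (δ : D),
      (ψ φ) (rhoR (MulOpposite.op c) δ) = rhoE (MulOpposite.op c) ((ψ φ) δ))
    -- right `A⊗1`-linearity of `ψ`:
    (hψEquiv : ∀ (c : A) (φ : Module.Dual ℂ A) (δ : D),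
      (ψ (φ ∘ₗ LinearMap.mulLeft ℂ c)) δ = (ψ φ) (rhoL (c ⊗ₜ[ℂ] (1 : A)) δ)) :
    ψ (b.constr ℂ fun nl => if nl.1 = 0 then (1 : ℂ) else 0) = 0 ∧
    ¬ Function.Injective ψ := by
  classical
  set z : Module.Dual ℂ A := b.constr ℂ fun nl => if nl.1 = 0 then (1 : ℂ) else 0
  have hshiftA : ∀ j n l, a 0 j * b (n, l) = b (n, j + l) := fun j n l => by
    simpa [hb] using hmul 0 j n l
  have hone : a 0 0 = 1 :=
    b.eq_one_of_forall_mul_basis _ fun ⟨n, l⟩ => by simpa using hshiftA 0 n l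
  have hz : ∀ j, z ∘ₗ LinearMap.mulLeft ℂ (a 0 j) = z := fun j =>
    b.constr_fst_comp_mulLeft (fun n => if n = 0 then 1 else 0) _ (j + ·) (hshiftA j)
  have hshiftE : ∀ j m, rhoE (MulOpposite.op (a 0 j)) (be m) = be (m - j) := fun j m => by
    simpa [hbe] using hE 0 j m
  have heigen : ∀ j n₁ n₂ l, ψ z (dd n₁ n₂ l) =
      Complex.exp (-(Complex.I * (lam * ((n₁ * j : ℤ) : ℝ)))) •
        rhoE (MulOpposite.op (a 0 j)) (ψ z (dd n₁ n₂ l)) := by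
    intro j n₁ n₂ l
    have hR₀ : rhoR (MulOpposite.op (a 0 j)) (dd n₁ n₂ l) = dd n₁ n₂ (l - j) := by
      simpa using hR 0 j n₁ n₂ l
    conv_lhs => rw [← hz j, hψEquiv, ← hone, hL]
    simp [← hψHom, hR₀]
  have hzero : ψ z = 0 := bd.ext fun ⟨n₁, n₂, l⟩ => by
    rw [hbd, LinearMap.zero_apply]
    exact be.eq_zero_of_forall_eq_smul_shift _ hshiftE _ _ (heigen · n₁ n₂ l)
  refine ⟨hzero, fun hinj => ?_⟩
  have hz₀ : z = 0 := hinj (by rw [hzero, map_zero])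
  simpa [z] using congrArg (· (b (0, 0))) hz₀
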